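/- arXiv:2603.27843 — 2 statements merged into one kernel-verified Lean document; each statement's English description precedes it below -/
import Mathlib

section
/- If X | θ ~ N(θ,1), θ | ξ ~ N(ξ,c²), ξ ~ H, then the posterior mean of θ given X equals α X + (1-α) E[ξ | X], where α = c²/(c²+1). -/
open MeasureTheory ProbabilityTheory Real

open scoped NNReal

/-! Completing the square gives
`φ_v(x - θ) φ_w(θ - ξ) = φ_{v+w}(x - ξ) φ_{vw/(v+w)}(θ - (w x + v ξ)/(v + w))`,
so given `X = x` and `ξ`, the parameter `θ` is Gaussian with mean `α x + (1 - α) ξ` (for `v = 1`,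
`w = c²`). Integrating out `θ` first (Fubini, legitimate because the kernel is nonnegative and the
posterior numerator is integrable) turns the numerator of the posterior mean into
`α x f(x) + (1 - α) ∫ ξ φ_{c²+1}(x - ξ) dH(ξ)`. -/

lemma integral_mul_gaussianPDFReal (μ : ℝ) {v : ℝ≥0} (hv : v ≠ 0) :
    ∫ x, x * gaussianPDFReal μ v x = μ := by
  simpa [mul_comm, integral_gaussianReal_eq_integral_smul hv] using
    integral_id_gaussianReal (μ := μ) (v := v)

lemma gaussianPDFReal_le (μ : ℝ) (v : ℝ≥0) (x : ℝ) :
    gaussianPDFReal μ v x ≤ (√(2 * π * v))⁻¹ := by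
  rw [gaussianPDFReal_def]
  refine mul_le_of_le_one_right (by positivity) (exp_le_one_iff.2 ?_)
  exact div_nonpos_of_nonpos_of_nonneg (neg_nonpos.2 (sq_nonneg _)) (by positivity)

lemma integrable_gaussianPDFReal_mean (v : ℝ≥0) (x : ℝ) (H : Measure ℝ) [IsFiniteMeasure H] :
    Integrable (fun μ => gaussianPDFReal μ v x) H := by
  have hmeas : Measurable fun μ => gaussianPDFReal μ v x :=
    measurable_uncurry_gaussianPDFReal.comp (f := fun μ => (μ, v, x)) (by fun_prop)
  refine .of_bound hmeas.aestronglyMeasurable (√(2 * π * v))⁻¹ (ae_of_all _ fun μ => ?_)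
  rw [norm_of_nonneg (gaussianPDFReal_nonneg _ _ _)]
  exact gaussianPDFReal_le μ v x

lemma gaussianPDFReal_mul_gaussianPDFReal (x θ ξ : ℝ) {v w : ℝ≥0} (hv : v ≠ 0) (hw : w ≠ 0) :
    gaussianPDFReal θ v x * gaussianPDFReal ξ w θ
      = gaussianPDFReal ξ (v + w) x
        * gaussianPDFReal ((w * x + v * ξ) / (v + w)) (v * w / (v + w)) θ := by
  simp only [gaussianPDFReal_def, NNReal.coe_add, NNReal.coe_mul, NNReal.coe_div]
  rw [mul_mul_mul_comm, mul_mul_mul_comm (√(2 * π * (v + w)))⁻¹, ← exp_add, ← exp_add,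
    ← mul_inv, ← mul_inv, ← sqrt_mul (by positivity), ← sqrt_mul (by positivity)]
  congr 2
  · field_simp
  · field_simp
    ring

lemma integrable_prod_mul_of_nonneg {α β : Type*} [MeasurableSpace α] [MeasurableSpace β]
    {μ : Measure α} {ν : Measure β} [SFinite μ] [SFinite ν] {h : α → ℝ} {k : α → β → ℝ}
    (hk_nonneg : ∀ a b, 0 ≤ k a b)
    (hmeas : AEStronglyMeasurable (Function.uncurry fun a b => h a * k a b) (μ.prod ν))
    (hk : ∀ a, Integrable (k a) ν) (hint : Integrable (fun a => h a * ∫ b, k a b ∂ν) μ) :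
    Integrable (Function.uncurry fun a b => h a * k a b) (μ.prod ν) := by
  refine (integrable_prod_iff hmeas).2 ⟨ae_of_all _ fun a => (hk a).const_mul (h a), ?_⟩
  refine hint.norm.congr (ae_of_all _ fun a => ?_)
  simp only [Function.uncurry_apply_pair, norm_mul, norm_of_nonneg (hk_nonneg a _),
    norm_of_nonneg (integral_nonneg (hk_nonneg a)), integral_const_mul]

lemma integral_mul_gaussianPDFReal_mul_gaussianPDFReal (x ξ : ℝ) {v w : ℝ≥0} (hv : v ≠ 0)
    (hw : w ≠ 0) :
    ∫ θ, θ * gaussianPDFReal θ v x * gaussianPDFReal ξ w θ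
      = gaussianPDFReal ξ (v + w) x * ((w * x + v * ξ) / (v + w)) := by
  simp_rw [mul_assoc, gaussianPDFReal_mul_gaussianPDFReal x _ ξ hv hw,
    mul_left_comm _ (gaussianPDFReal ξ (v + w) x)]
  rw [integral_const_mul, integral_mul_gaussianPDFReal _ (by positivity)]

lemma integral_mul_gaussianPDFReal_mul_integral_gaussianPDFReal (H : Measure ℝ)
    [IsFiniteMeasure H] (x : ℝ) {v w : ℝ≥0} (hv : v ≠ 0) (hw : w ≠ 0)
    (h_post : Integrable (fun θ => θ * gaussianPDFReal θ v x * ∫ ξ, gaussianPDFReal ξ w θ ∂H))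
    (h_prior : Integrable (fun ξ => ξ * gaussianPDFReal ξ (v + w) x) H) :
    ∫ θ, θ * gaussianPDFReal θ v x * ∫ ξ, gaussianPDFReal ξ w θ ∂H
      = (w * x * ∫ ξ, gaussianPDFReal ξ (v + w) x ∂H
          + v * ∫ ξ, ξ * gaussianPDFReal ξ (v + w) x ∂H) / (v + w) := by
  have hF := integrable_prod_mul_of_nonneg (μ := volume) (ν := H)
    (h := fun θ => θ * gaussianPDFReal θ v x) (k := fun θ ξ => gaussianPDFReal ξ w θ)
    (fun _ _ => gaussianPDFReal_nonneg _ _ _)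
    (by simp only [Function.uncurry_def, gaussianPDFReal]; fun_prop)
    (fun θ => integrable_gaussianPDFReal_mean w θ H) h_post
  calc ∫ θ, θ * gaussianPDFReal θ v x * ∫ ξ, gaussianPDFReal ξ w θ ∂H
      = ∫ θ, ∫ ξ, θ * gaussianPDFReal θ v x * gaussianPDFReal ξ w θ ∂H := by
        simp_rw [← integral_const_mul]
    _ = ∫ ξ, (∫ θ, θ * gaussianPDFReal θ v x * gaussianPDFReal ξ w θ) ∂H :=
        integral_integral_swap hF
    _ = ∫ ξ, (w * x * gaussianPDFReal ξ (v + w) x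
          + v * (ξ * gaussianPDFReal ξ (v + w) x)) / (v + w) ∂H := by
        congr 1 with ξ
        rw [integral_mul_gaussianPDFReal_mul_gaussianPDFReal x ξ hv hw]
        ring
    _ = _ := by
        rw [integral_div, integral_add ((integrable_gaussianPDFReal_mean _ x H).const_mul _)
          (h_prior.const_mul _), integral_const_mul, integral_const_mul]

/-- `g` is the prior density of `θ` and `f` the marginal density of `X`; the conditional
expectations `E[θ | X = x]` and `E[ξ | X = x]` appear as ratios of integrals against the joint
density. -/
theorem posterior_mean_decomposition
    (c : ℝ) (hc : 0 < c) (H : Measure ℝ) [IsProbabilityMeasure H]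
    (α : ℝ) (hα : α = c ^ 2 / (c ^ 2 + 1))
    (g f : ℝ → ℝ)
    (hg : ∀ θ, g θ = ∫ ξ, gaussianPDFReal ξ ((c ^ 2).toNNReal) θ ∂H)
    (hf : ∀ x, f x = ∫ ξ, gaussianPDFReal ξ ((c ^ 2 + 1).toNNReal) x ∂H)
    (x : ℝ) (hfx : f x ≠ 0)
    (h1 : Integrable (fun θ => θ * (gaussianPDFReal θ 1 x * g θ)))
    (h2 : Integrable (fun ξ => ξ * gaussianPDFReal ξ ((c ^ 2 + 1).toNNReal) x) H) :
    (∫ θ, θ * (gaussianPDFReal θ 1 x * g θ)) / f x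
      = α * x + (1 - α) *
          ((∫ ξ, ξ * gaussianPDFReal ξ ((c ^ 2 + 1).toNNReal) x ∂H) / f x) := by
  have hw : (c ^ 2).toNNReal ≠ 0 := by simpa using hc.ne'
  have hw_coe : ((c ^ 2).toNNReal : ℝ) = c ^ 2 := Real.coe_toNNReal _ (sq_nonneg c)
  have hvar : 1 + (c ^ 2).toNNReal = (c ^ 2 + 1).toNNReal := by
    rw [← NNReal.coe_inj, NNReal.coe_add, NNReal.coe_one, hw_coe,
      Real.coe_toNNReal _ (by positivity), add_comm]
  have numerator := integral_mul_gaussianPDFReal_mul_integral_gaussianPDFReal H x one_ne_zero hw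
    (by simpa only [hg, mul_assoc] using h1) (hvar ▸ h2)
  simp only [hvar, hw_coe, NNReal.coe_one, ← hf, mul_assoc, ← hg] at numerator
  rw [numerator, hα]
  field_simp
  ring
end

section
/- Existence of the KL projection: under a sub-exponential tail condition on p, the map H ↦ KL(p ‖ f_H) attains its minimum over P([-L,L]), where f_H is the density of H ⋆ N(0,σ²). -/
open MeasureTheory ProbabilityTheory Real

/-- Density of the Gaussian location mixture `H ⋆ N(0,σ²)`. -/
noncomputable def mixDensity (σ : ℝ) (H : Measure ℝ) : ℝ → ℝ :=
  fun x => ∫ ξ, gaussianPDFReal ξ ((σ ^ 2).toNNReal) x ∂H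

/-- Kullback–Leibler divergence `KL(p ‖ f) = ∫ p log(p/f)`. -/
noncomputable def klDiv' (p f : ℝ → ℝ) : ℝ := ∫ x, p x * Real.log (p x / f x)

/-!
By Prokhorov's theorem the probability measures carried by `[-L, L]` form a compact set, and
minimising `KL(p ‖ f_H) = ∫ p log p - ∫ p log f_H` amounts to maximising `J H = ∫ p log f_H`,
so it suffices that `J` is continuous there. Each `f_H x` integrates the bounded continuous
function `ξ ↦ φ_σ(x - ξ)` against `H`, hence is weakly continuous in `H`; and the Gaussian bounds
`φ_σ(|x| + L) ≤ f_H x ≤ φ_σ(0)` give `|log f_H x| ≤ C (1 + x²)`, a dominating function that is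
integrable against `p`. When `p log p` is not integrable, `klDiv'` is the junk value `0` for
every `H` and there is nothing to prove.
-/

open Set Filter Topology
open scoped NNReal BoundedContinuousFunction

section Gaussian

variable {v : ℝ≥0}

lemma gaussianPDFReal_le_of_abs_sub_le {μ ν x y : ℝ} (h : |x - μ| ≤ |y - ν|) :
    gaussianPDFReal ν v y ≤ gaussianPDFReal μ v x := by
  rw [gaussianPDFReal, gaussianPDFReal]
  have hsq : -(y - ν) ^ 2 ≤ -(x - μ) ^ 2 := neg_le_neg (sq_le_sq.2 h)
  gcongr

lemma log_gaussianPDFReal (hv : v ≠ 0) (μ x : ℝ) :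
    log (gaussianPDFReal μ v x) = log (gaussianPDFReal μ v μ) - (x - μ) ^ 2 / (2 * v) := by
  have hc : (√(2 * π * v))⁻¹ ≠ 0 := by positivity
  simp only [gaussianPDFReal, log_mul hc (exp_ne_zero _), log_exp, sub_self]
  ring

lemma gaussianPDFReal_le_gaussianPDFReal_zero (μ x : ℝ) :
    gaussianPDFReal μ v x ≤ gaussianPDFReal 0 v 0 :=
  gaussianPDFReal_le_of_abs_sub_le (by simp)

variable (v) in
noncomputable def gaussianKernel (x : ℝ) : ℝ →ᵇ ℝ :=
  .ofNormedAddCommGroup (fun μ => gaussianPDFReal μ v x)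
    (by unfold gaussianPDFReal; fun_prop) (gaussianPDFReal 0 v 0) fun μ => by
      rw [norm_of_nonneg (gaussianPDFReal_nonneg _ _ _)]
      exact gaussianPDFReal_le_gaussianPDFReal_zero μ x

@[simp]
lemma gaussianKernel_apply (x μ : ℝ) : gaussianKernel v x μ = gaussianPDFReal μ v x := rfl

end Gaussian

section Mixture

variable {σ L : ℝ} {H : Measure ℝ}

lemma mixDensity_le [IsProbabilityMeasure H] (x : ℝ) :
    mixDensity σ H x ≤ gaussianPDFReal 0 (σ ^ 2).toNNReal 0 := by
  simpa [mixDensity] using integral_mono ((gaussianKernel _ x).integrable H) (integrable_const _)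
    fun ξ => gaussianPDFReal_le_gaussianPDFReal_zero ξ x

lemma gaussianPDFReal_le_mixDensity [IsProbabilityMeasure H] (hH : H (Icc (-L) L)ᶜ = 0)
    (x : ℝ) : gaussianPDFReal 0 (σ ^ 2).toNNReal (|x| + L) ≤ mixDensity σ H x := by
  have hbound : ∀ᵐ ξ ∂H, gaussianPDFReal 0 (σ ^ 2).toNNReal (|x| + L) ≤
      gaussianKernel (σ ^ 2).toNNReal x ξ := by
    filter_upwards [mem_ae_iff.2 hH] with ξ hξ
    refine gaussianPDFReal_le_of_abs_sub_le ?_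
    calc |x - ξ| ≤ |x| + |ξ| := abs_sub _ _
      _ ≤ |x| + L := by gcongr; exact abs_le.2 hξ
      _ ≤ |(|x| + L) - 0| := by rw [sub_zero]; exact le_abs_self _
  simpa [mixDensity] using
    integral_mono_ae (integrable_const _) ((gaussianKernel _ x).integrable H) hbound

lemma mixDensity_pos (hσ : σ ≠ 0) [IsProbabilityMeasure H] (hH : H (Icc (-L) L)ᶜ = 0)
    (x : ℝ) : 0 < mixDensity σ H x :=
  (gaussianPDFReal_pos _ _ _ (by simpa using hσ)).trans_le (gaussianPDFReal_le_mixDensity hH x)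

lemma continuous_mixDensity [IsFiniteMeasure H] : Continuous (mixDensity σ H) :=
  continuous_of_dominated (fun x => (gaussianKernel _ x).continuous.aestronglyMeasurable)
    (fun x => ae_of_all _ fun ξ => by
      rw [norm_of_nonneg (gaussianPDFReal_nonneg _ _ _)]
      exact gaussianPDFReal_le_gaussianPDFReal_zero ξ x) (integrable_const _)
    (ae_of_all _ fun ξ => by unfold gaussianPDFReal; fun_prop)

lemma continuous_mixDensity_apply (σ x : ℝ) :
    Continuous fun μ : ProbabilityMeasure ℝ => mixDensity σ μ x :=
  ProbabilityMeasure.continuous_integral_boundedContinuousFunction (gaussianKernel _ x)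

lemma exists_abs_log_mixDensity_le (hσ : σ ≠ 0) (L : ℝ) :
    ∃ C, ∀ H : Measure ℝ, IsProbabilityMeasure H → H (Icc (-L) L)ᶜ = 0 →
      ∀ x, |log (mixDensity σ H x)| ≤ C * (1 + x ^ 2) := by
  set v := (σ ^ 2).toNNReal
  have hv : v ≠ 0 := by simpa [v] using hσ
  set a := log (gaussianPDFReal 0 v 0)
  refine ⟨|a| + (1 + L ^ 2) / v, fun H _ hH x => ?_⟩
  have hlow : a - (|x| + L) ^ 2 / (2 * v) ≤ log (mixDensity σ H x) := by
    rw [← sub_zero (|x| + L), ← log_gaussianPDFReal hv]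
    exact log_le_log (gaussianPDFReal_pos _ _ _ hv) (gaussianPDFReal_le_mixDensity hH x)
  have hup : log (mixDensity σ H x) ≤ a :=
    log_le_log (mixDensity_pos hσ hH x) (mixDensity_le x)
  have hquad : (|x| + L) ^ 2 / (2 * v) ≤ (1 + L ^ 2) / v * (1 + x ^ 2) := by
    rw [div_le_iff₀ (by positivity),
      show (1 + L ^ 2) / v * (1 + x ^ 2) * (2 * v) = 2 * (1 + L ^ 2) * (1 + x ^ 2) by field_simp]
    nlinarith [sq_abs x, sq_nonneg (|x| - L), sq_nonneg (x * L)]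
  have ht : 0 ≤ (|x| + L) ^ 2 / (2 * v) := by positivity
  calc |log (mixDensity σ H x)| ≤ max |a - (|x| + L) ^ 2 / (2 * v)| |a| :=
        abs_le_max_abs_abs hlow hup
    _ ≤ |a| + (|x| + L) ^ 2 / (2 * v) := by
        refine max_le ((abs_sub _ _).trans_eq ?_) (le_add_of_nonneg_right ht)
        rw [abs_of_nonneg ht]
    _ ≤ (|a| + (1 + L ^ 2) / v) * (1 + x ^ 2) := by
        nlinarith [abs_nonneg a, sq_nonneg x]

lemma exists_norm_mul_log_mixDensity_le (hσ : σ ≠ 0) (L : ℝ) (p : ℝ → ℝ) :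
    ∃ C, ∀ H : Measure ℝ, IsProbabilityMeasure H → H (Icc (-L) L)ᶜ = 0 →
      ∀ x, ‖p x * log (mixDensity σ H x)‖ ≤ C * ‖(1 + x ^ 2) * p x‖ := by
  obtain ⟨C, hC⟩ := exists_abs_log_mixDensity_le hσ L
  refine ⟨C, fun H hprob hH x => ?_⟩
  rw [norm_mul, norm_mul, Real.norm_of_nonneg (by positivity : (0 : ℝ) ≤ 1 + x ^ 2), mul_comm,
    ← mul_assoc]
  exact mul_le_mul_of_nonneg_right (hC H hprob hH x) (norm_nonneg _)

variable {p : ℝ → ℝ}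

lemma integrable_mul_log_mixDensity (hσ : σ ≠ 0) (hpm : Measurable p)
    (hmom : Integrable fun x => (1 + x ^ 2) * p x) [IsProbabilityMeasure H]
    (hH : H (Icc (-L) L)ᶜ = 0) : Integrable fun x => p x * log (mixDensity σ H x) := by
  obtain ⟨C, hC⟩ := exists_norm_mul_log_mixDensity_le hσ L p
  exact (hmom.norm.const_mul C).mono'
    (hpm.mul (measurable_log.comp continuous_mixDensity.measurable)).aestronglyMeasurable
    (ae_of_all _ (hC H inferInstance hH))

lemma continuousOn_integral_mul_log_mixDensity (hσ : σ ≠ 0) (hpm : Measurable p)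
    (hmom : Integrable fun x => (1 + x ^ 2) * p x) :
    ContinuousOn (fun μ : ProbabilityMeasure ℝ => ∫ x, p x * log (mixDensity σ μ x))
      {μ | (μ : Measure ℝ) (Icc (-L) L)ᶜ = 0} := by
  obtain ⟨C, hC⟩ := exists_norm_mul_log_mixDensity_le hσ L p
  intro μ hμ
  refine tendsto_integral_filter_of_dominated_convergence _
    (Eventually.of_forall fun ν => (hpm.mul (measurable_log.comp
      continuous_mixDensity.measurable)).aestronglyMeasurable)
    (eventually_nhdsWithin_of_forall fun ν hν => ae_of_all _ (hC ν inferInstance hν))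
    (hmom.norm.const_mul C) (ae_of_all _ fun x => ?_)
  have hlog : ContinuousAt log (mixDensity σ μ x) :=
    continuousAt_log (mixDensity_pos hσ hμ x).ne'
  exact ((hlog.tendsto.comp (continuous_mixDensity_apply σ x).continuousAt).const_mul
    (p x)).mono_left nhdsWithin_le_nhds

end Mixture

lemma isCompact_setOf_probabilityMeasure_compl_eq_zero {E : Type*} [MeasurableSpace E]
    [TopologicalSpace E] [T2Space E] [BorelSpace E] {K : Set E} (hK : IsCompact K) :
    IsCompact {μ : ProbabilityMeasure E | (μ : Measure E) Kᶜ = 0} := by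
  convert isCompact_setOfPred_probabilityMeasure_mass_eq_compl_isCompact_le
    (tendsto_const_nhds (x := (0 : ℝ≥0))) (fun _ : ℕ => hK) (Or.inr monotone_const) using 3
  simp only [nonpos_iff_eq_zero, forall_const, ProbabilityMeasure.null_iff_toMeasure_null]

lemma mul_log_div {p f : ℝ} (hf : f ≠ 0) : p * log (p / f) = p * log p - p * log f := by
  rcases eq_or_ne p 0 with rfl | hp
  · simp
  · rw [log_div hp hf, mul_sub]

lemma klDiv'_eq_sub {p f : ℝ → ℝ} (hf : ∀ x, f x ≠ 0)
    (hpp : Integrable fun x => p x * log (p x)) (hpf : Integrable fun x => p x * log (f x)) :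
    klDiv' p f = (∫ x, p x * log (p x)) - ∫ x, p x * log (f x) := by
  simp only [klDiv', mul_log_div (hf _)]
  exact integral_sub hpp hpf

lemma klDiv'_eq_zero {p f : ℝ → ℝ} (hf : ∀ x, f x ≠ 0)
    (hpp : ¬ Integrable fun x => p x * log (p x)) (hpf : Integrable fun x => p x * log (f x)) :
    klDiv' p f = 0 := by
  refine integral_undef fun h => hpp ?_
  refine (h.add hpf).congr (ae_of_all _ fun x => ?_)
  simp only [Pi.add_apply, mul_log_div (hf x), sub_add_cancel]

lemma klDiv'_le_klDiv' {p f g : ℝ → ℝ} (hf : ∀ x, f x ≠ 0) (hg : ∀ x, g x ≠ 0)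
    (hpf : Integrable fun x => p x * log (f x)) (hpg : Integrable fun x => p x * log (g x))
    (h : ∫ x, p x * log (g x) ≤ ∫ x, p x * log (f x)) : klDiv' p f ≤ klDiv' p g := by
  by_cases hpp : Integrable fun x => p x * log (p x)
  · rw [klDiv'_eq_sub hf hpp hpf, klDiv'_eq_sub hg hpp hpg]
    linarith
  · rw [klDiv'_eq_zero hf hpp hpf, klDiv'_eq_zero hg hpp hpg]

theorem kl_projection_exists_general
    (σ L : ℝ) (hσ : 0 < σ) (hL : 0 < L)
    (p : ℝ → ℝ) (hpm : Measurable p)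
    (hmom : Integrable (fun x => (1 + x ^ 2) * p x)) :
    ∃ H₀ : Measure ℝ, IsProbabilityMeasure H₀ ∧ H₀ (Set.Icc (-L) L)ᶜ = 0 ∧
      ∀ H : Measure ℝ, IsProbabilityMeasure H → H (Set.Icc (-L) L)ᶜ = 0 →
        klDiv' p (mixDensity σ H₀) ≤ klDiv' p (mixDensity σ H) := by
  set S := {μ : ProbabilityMeasure ℝ | (μ : Measure ℝ) (Icc (-L) L)ᶜ = 0}
  have hδ : (⟨Measure.dirac 0, inferInstance⟩ : ProbabilityMeasure ℝ) ∈ S := by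
    change Measure.dirac (0 : ℝ) (Icc (-L) L)ᶜ = 0
    simp [Measure.dirac_apply' _ measurableSet_Icc.compl, hL.le]
  obtain ⟨μ₀, hμ₀, hmax⟩ :=
    (isCompact_setOf_probabilityMeasure_compl_eq_zero isCompact_Icc).exists_isMaxOn ⟨_, hδ⟩
      (continuousOn_integral_mul_log_mixDensity hσ.ne' hpm hmom)
  refine ⟨μ₀, inferInstance, hμ₀, fun H hprob hH => ?_⟩
  exact klDiv'_le_klDiv' (fun x => (mixDensity_pos hσ.ne' hμ₀ x).ne')
    (fun x => (mixDensity_pos hσ.ne' hH x).ne')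
    (integrable_mul_log_mixDensity hσ.ne' hpm hmom hμ₀)
    (integrable_mul_log_mixDensity hσ.ne' hpm hmom hH) (hmax (show ⟨H, hprob⟩ ∈ S from hH))

/-- Existence of the KL projection: for a probability density `p` with finite second moment,
the map `H ↦ KL(p ‖ f_H)` attains its minimum over `P([-L,L])`. -/
theorem kl_projection_exists
    (σ L : ℝ) (hσ : 0 < σ) (hL : 0 < L)
    (p : ℝ → ℝ) (hpm : Measurable p) (hp : ∀ x, 0 ≤ p x) (hpd : ∫ x, p x = 1)
    (hmom : Integrable (fun x => (1 + x ^ 2) * p x)) :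
    ∃ H₀ : Measure ℝ, IsProbabilityMeasure H₀ ∧ H₀ (Set.Icc (-L) L)ᶜ = 0 ∧
      ∀ H : Measure ℝ, IsProbabilityMeasure H → H (Set.Icc (-L) L)ᶜ = 0 →
        klDiv' p (mixDensity σ H₀) ≤ klDiv' p (mixDensity σ H) :=
  kl_projection_exists_general σ L hσ hL p hpm hmom
end
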